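/- arXiv:math/0107185 — 2 statements merged into one kernel-verified Lean document; each statement's English description precedes it below -/
import Mathlib

section
/- Let R = ℚ[x]/(x^{n+1}) and let T : R → R be the ℚ-linear map determined by T(x^k) = x^k·(1+x)^{−k} (where (1+x)^{−1} is the inverse of the unit 1+x in R). Then for every polynomial g ∈ R and every A ∈ R, one has T(g·A) = g(x/(1+x))·T(A), where g(x/(1+x)) denotes substitution of the element x·(1+x)^{−1} into g. -/
open Polynomial

/-- The ring ℚ[x]/(x^(n+1)). -/
abbrev Rq (n : ℕ) : Type :=
  Polynomial ℚ ⧸ Ideal.span {(Polynomial.X : Polynomial ℚ) ^ (n + 1)}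

/-- The class of x in ℚ[x]/(x^(n+1)). -/
noncomputable def xq (n : ℕ) : Rq n :=
  Ideal.Quotient.mk _ Polynomial.X

/-- if T is the ℚ-linear map with T(x^k) = x^k(1+x)^{-k}, then
T(g·A) = g(x/(1+x))·T(A) for every polynomial g and every A. -/
theorem stmt1 (n : ℕ) (T : Rq n →ₗ[ℚ] Rq n)
    (hT : ∀ k : ℕ, T (xq n ^ k) = xq n ^ k * Ring.inverse ((1 + xq n) ^ k))
    (g : Polynomial ℚ) (A : Rq n) :
    T (Polynomial.aeval (xq n) g * A)
      = Polynomial.aeval (xq n * Ring.inverse (1 + xq n)) g * T A := by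
  have hsmul : ∀ (c : ℚ) (y : Rq n), c • y = algebraMap ℚ (Rq n) c * y := fun c y =>
    Algebra.smul_def c y
  have hT' : ∀ k : ℕ, T (xq n ^ k) = xq n ^ k * Ring.inverse (1 + xq n) ^ k := by
    intro k; rw [hT k, Ring.inverse_pow]
  have key : ∀ k : ℕ, ∀ A : Rq n,
      T (xq n ^ k * A) = (xq n * Ring.inverse (1 + xq n)) ^ k * T A := by
    intro k A
    obtain ⟨p, rfl⟩ := Ideal.Quotient.mk_surjective A
    induction p using Polynomial.induction_on' with
    | add p q hp hq =>
      simp only [map_add, mul_add, hp, hq]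
    | monomial j c =>
      have hm : (Ideal.Quotient.mk _ (Polynomial.monomial j c) : Rq n)
          = algebraMap ℚ (Rq n) c * xq n ^ j := by
        rw [← Polynomial.C_mul_X_pow_eq_monomial, map_mul, map_pow]; rfl
      rw [hm, mul_left_comm, ← hsmul, map_smul, ← pow_add, hT' (k + j),
        hsmul]
      rw [← hsmul c (xq n ^ j), map_smul, hT' j, hsmul]
      ring
  induction g using Polynomial.induction_on' with
  | add p q hp hq =>
    simp only [map_add, add_mul, hp, hq]
  | monomial k c =>
    simp only [Polynomial.aeval_monomial]
    rw [mul_assoc, ← hsmul, map_smul, key k A, hsmul, mul_assoc]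
end

section
/- Let R = ℚ[x]/(x^{n+1}). For λ ∈ ℚ define the ℚ-linear map T_λ : R → R by T_λ(x^k) = x^k·(1+λx)^{−k}. Then for all λ, μ ∈ ℚ and all A ∈ R, one has T_μ(T_λ(A)) = T_{λ+μ}(A). -/
open Polynomial

/-!
Since `T_c (x^k) = (x / (1 + c x))^k`, each `T_c` is the ℚ-algebra endomorphism of
`ℚ[x]/(x^(n+1))` determined by `x ↦ x / (1 + c x)`. Composing these endomorphisms composes the
Möbius transformations `x ↦ x / (1 + c x)`, and these form a one-parameter group:
substituting `x / (1 + μ x)` into `x / (1 + λ x)` gives `x / (1 + (λ + μ) x)`.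
-/

open scoped Ring

lemma map_ringInverse_of_isUnit {M N F : Type*} [MonoidWithZero M] [MonoidWithZero N]
    [FunLike F M N] [MonoidHomClass F M N] (f : F) {a : M} (ha : IsUnit a) :
    f a⁻¹ʳ = (f a)⁻¹ʳ := by
  obtain ⟨u, rfl⟩ := ha
  rw [Ring.inverse_unit, show f u = (Units.map (f : M →* N) u : N) from rfl, Ring.inverse_unit,
    ← map_inv]
  rfl

section Mobius

variable {K S : Type*} [CommRing K] [CommRing S] [Algebra K S]

/-- `x / (1 + c x)`, which `Ring.inverse` makes `0` when `1 + c x` is not a unit. -/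
noncomputable def mobius (c : K) (x : S) : S := x * (1 + c • x)⁻¹ʳ

lemma mobius_pow (c : K) (x : S) (k : ℕ) : mobius c x ^ k = x ^ k * ((1 + c • x) ^ k)⁻¹ʳ := by
  rw [mobius, mul_pow, Ring.inverse_pow]

lemma mobius_mobius {a b : K} {x : S} (hb : IsUnit (1 + b • x)) :
    mobius a (mobius b x) = mobius (a + b) x := by
  set v := (1 + b • x)⁻¹ʳ
  have hv : (1 + b • x) * v = 1 := Ring.mul_inverse_cancel _ hb
  have hfac : 1 + a • (x * v) = (1 + (a + b) • x) * v := by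
    simp only [Algebra.smul_def, map_add] at hv ⊢
    linear_combination -hv
  calc mobius a (mobius b x) = x * v * (v⁻¹ʳ * (1 + (a + b) • x)⁻¹ʳ) := by
        rw [mobius, mobius, hfac, Ring.mul_inverse_rev]
    _ = (1 + b • x) * v * (x * (1 + (a + b) • x)⁻¹ʳ) := by
        rw [Ring.inverse_inverse hb]; ring
    _ = mobius (a + b) x := by rw [hv, one_mul, mobius]

lemma map_mobius {S' : Type*} [CommRing S'] [Algebra K S'] (f : S →ₐ[K] S') {c : K} {x : S}
    (hx : IsUnit (1 + c • x)) : f (mobius c x) = mobius c (f x) := by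
  rw [mobius, mobius, map_mul, map_ringInverse_of_isUnit f hx, map_add, map_one, map_smul]

end Mobius

section Truncated

variable {K : Type*} [CommRing K]

lemma Ideal.Quotient.linearMap_ext_X_pow {I : Ideal K[X]} {M : Type*} [AddCommMonoid M]
    [Module K M] {f g : K[X] ⧸ I →ₗ[K] M}
    (h : ∀ k : ℕ, f (Ideal.Quotient.mk I X ^ k) = g (Ideal.Quotient.mk I X ^ k)) : f = g := by
  rw [← LinearMap.cancel_right (g := (Ideal.Quotient.mkₐ K I).toLinearMap)
    (Ideal.Quotient.mkₐ_surjective K I)]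
  refine Polynomial.lhom_ext' fun k => LinearMap.ext_ring ?_
  simpa [← C_mul_X_pow_eq_monomial] using h k

variable {n : ℕ} {S : Type*} [CommRing S] [Algebra K S]

noncomputable def truncAeval (y : S) (hy : y ^ (n + 1) = 0) :
    K[X] ⧸ Ideal.span {(X : K[X]) ^ (n + 1)} →ₐ[K] S :=
  Ideal.Quotient.liftₐ _ (aeval y) fun p hp => by
    obtain ⟨q, rfl⟩ := Ideal.mem_span_singleton'.mp hp
    rw [map_mul, map_pow, aeval_X, hy, mul_zero]

lemma truncAeval_mk_X (y : S) (hy : y ^ (n + 1) = 0) :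
    truncAeval (K := K) y hy (Ideal.Quotient.mk _ X) = y :=
  (Ideal.Quotient.lift_mk _ _ _).trans (aeval_X y)

end Truncated

lemma xq_pow_succ (n : ℕ) : xq n ^ (n + 1) = 0 := by
  rw [xq, ← map_pow, Ideal.Quotient.eq_zero_iff_mem]
  exact Ideal.subset_span rfl

lemma isUnit_one_add_smul_xq (n : ℕ) (c : ℚ) : IsUnit (1 + c • xq n) :=
  IsNilpotent.isUnit_one_add ⟨n + 1, by rw [_root_.smul_pow, xq_pow_succ, smul_zero]⟩

lemma mobius_xq_pow_succ (n : ℕ) (c : ℚ) : mobius c (xq n) ^ (n + 1) = 0 := by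
  rw [mobius, mul_pow, xq_pow_succ, zero_mul]

noncomputable def twist (n : ℕ) (c : ℚ) : Rq n →ₐ[ℚ] Rq n :=
  truncAeval (mobius c (xq n)) (mobius_xq_pow_succ n c)

lemma twist_xq (n : ℕ) (c : ℚ) : twist n c (xq n) = mobius c (xq n) :=
  truncAeval_mk_X _ _

lemma twist_comp_twist (n : ℕ) (lam mu : ℚ) :
    (twist n mu).comp (twist n lam) = twist n (lam + mu) := by
  refine Ideal.Quotient.algHom_ext ℚ (Polynomial.algHom_ext ?_)
  change twist n mu (twist n lam (xq n)) = twist n (lam + mu) (xq n)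
  rw [twist_xq, map_mobius _ (isUnit_one_add_smul_xq n lam), twist_xq, twist_xq,
    mobius_mobius (isUnit_one_add_smul_xq n mu)]

lemma eq_twist_of_apply_xq_pow {n : ℕ} {c : ℚ} {T : Rq n →ₗ[ℚ] Rq n}
    (hT : ∀ k : ℕ, T (xq n ^ k) = xq n ^ k * Ring.inverse ((1 + c • xq n) ^ k)) :
    T = (twist n c).toLinearMap :=
  Ideal.Quotient.linearMap_ext_X_pow fun k => by
    change T (xq n ^ k) = twist n c (xq n ^ k)
    rw [hT, map_pow, twist_xq, mobius_pow]

/-- with T_λ(x^k) = x^k(1+λx)^{-k}, one has T_μ ∘ T_λ = T_{λ+μ}. -/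
theorem stmt2 (n : ℕ) (lam mu : ℚ)
    (Tlam Tmu Tsum : Rq n →ₗ[ℚ] Rq n)
    (hlam : ∀ k : ℕ, Tlam (xq n ^ k) = xq n ^ k * Ring.inverse ((1 + lam • xq n) ^ k))
    (hmu : ∀ k : ℕ, Tmu (xq n ^ k) = xq n ^ k * Ring.inverse ((1 + mu • xq n) ^ k))
    (hsum : ∀ k : ℕ, Tsum (xq n ^ k) = xq n ^ k * Ring.inverse ((1 + (lam + mu) • xq n) ^ k))
    (A : Rq n) :
    Tmu (Tlam A) = Tsum A := by
  rw [eq_twist_of_apply_xq_pow hlam, eq_twist_of_apply_xq_pow hmu, eq_twist_of_apply_xq_pow hsum]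
  exact AlgHom.congr_fun (twist_comp_twist n lam mu) A
end
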